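/- arXiv:2010.11665 — 5 statements merged into one kernel-verified Lean document; each statement's English description precedes it below -/
import Mathlib

section
/- For every x ∈ ℝ and every η ∈ ℝ with η ≠ 0, log Ψ(x) ≥ (x − η)/2 + log Ψ(η) − (1/(4η))·tanh(η/2)·(x² − η²). -/
/-- The logistic function `Ψ(t) = eᵗ/(1+eᵗ)`. -/
noncomputable def logistic (t : ℝ) : ℝ := Real.exp t / (1 + Real.exp t)

open Real Set

lemma hasDerivAt_tanh' (t : ℝ) : HasDerivAt Real.tanh (1 / Real.cosh t ^ 2) t := by
  have h := (Real.hasDerivAt_sinh t).div (Real.hasDerivAt_cosh t) (Real.cosh_pos t).ne'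
  have heq : Real.tanh = Real.sinh / Real.cosh := by
    funext x; exact Real.tanh_eq_sinh_div_cosh x
  rw [heq]
  refine h.congr_deriv ?_
  have := Real.cosh_sq_sub_sinh_sq t
  have hc := (Real.cosh_pos t).ne'
  rw [← this]
  ring

lemma tanh_differentiable : Differentiable ℝ Real.tanh :=
  fun t => (hasDerivAt_tanh' t).differentiableAt

-- tanh t / t is antitone on (0, ∞)
lemma tanh_div_antitone : AntitoneOn (fun t : ℝ => Real.tanh t / t) (Set.Ioi 0) := by
  apply antitoneOn_of_deriv_nonpos (convex_Ioi 0)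
  · exact (tanh_differentiable.continuous.continuousOn).div continuousOn_id
      (fun t ht => ne_of_gt ht)
  · rw [interior_Ioi]
    intro t ht
    exact ((hasDerivAt_tanh' t).div (hasDerivAt_id t) (ne_of_gt ht)).differentiableAt.differentiableWithinAt
  · rw [interior_Ioi]
    intro t ht
    have hd : HasDerivAt (fun t : ℝ => Real.tanh t / t)
        ((1 / Real.cosh t ^ 2 * t - Real.tanh t * 1) / t ^ 2) t :=
      (hasDerivAt_tanh' t).div (hasDerivAt_id t) (ne_of_gt ht)
    rw [hd.deriv]
    apply div_nonpos_of_nonpos_of_nonneg _ (sq_nonneg t)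
    have hc := Real.cosh_pos t
    have ht' : (0:ℝ) < t := ht
    have hs : t ≤ Real.sinh t * Real.cosh t := by
      nlinarith [(Real.self_lt_sinh_iff.2 ht').le, Real.one_le_cosh t,
        Real.sinh_pos_iff.2 ht']
    rw [Real.tanh_eq_sinh_div_cosh, mul_one, sub_nonpos, div_mul_eq_mul_div,
      div_le_div_iff₀ (by positivity) hc]
    nlinarith [mul_le_mul_of_nonneg_right hs hc.le]

-- key concavity-type bound
lemma logcosh_bound {a b : ℝ} (ha : 0 ≤ a) (hb : 0 < b) :
    Real.log (Real.cosh a) ≤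
      Real.log (Real.cosh b) + Real.tanh b / (2 * b) * (a ^ 2 - b ^ 2) := by
  set k : ℝ := Real.tanh b / (2 * b) with hk
  set F : ℝ → ℝ := fun t => Real.log (Real.cosh b) + k * (t ^ 2 - b ^ 2)
      - Real.log (Real.cosh t) with hF
  have hFb : F b = 0 := by simp [hF]
  have hFd : ∀ t : ℝ, HasDerivAt F (k * (2 * t) - Real.tanh t) t := by
    intro t
    have h1 : HasDerivAt (fun t : ℝ => Real.log (Real.cosh t))
        (Real.sinh t / Real.cosh t) t :=
      (Real.hasDerivAt_cosh t).log (Real.cosh_pos t).ne'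
    have h2 : HasDerivAt (fun t : ℝ => Real.log (Real.cosh b) + k * (t ^ 2 - b ^ 2))
        (k * (2 * t)) t := by
      have : HasDerivAt (fun t : ℝ => t ^ 2 - b ^ 2) (2 * t) t := by
        simpa using (hasDerivAt_pow 2 t).sub_const (b ^ 2)
      exact ((this.const_mul k).const_add _)
    have := h2.sub h1
    rw [Real.tanh_eq_sinh_div_cosh]
    exact this
  -- antitone on [0, b]
  have hanti : AntitoneOn F (Icc 0 b) := by
    apply antitoneOn_of_deriv_nonpos (convex_Icc 0 b)
    · exact fun t _ => (hFd t).continuousAt.continuousWithinAt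
    · exact fun t _ => (hFd t).differentiableAt.differentiableWithinAt
    · intro t ht
      rw [interior_Icc] at ht
      rw [(hFd t).deriv]
      have h1 : Real.tanh b / b ≤ Real.tanh t / t :=
        tanh_div_antitone ht.1 hb ht.2.le
      have ht0 : 0 < t := ht.1
      have : k * (2 * t) = (Real.tanh b / b) * t := by
        rw [hk]; field_simp
      rw [this]
      have h2 : Real.tanh b / b * t ≤ Real.tanh t / t * t :=
        mul_le_mul_of_nonneg_right h1 ht0.le
      rw [div_mul_cancel₀ _ ht0.ne'] at h2
      linarith
  -- monotone on [b, ∞)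
  have hmono : MonotoneOn F (Ici b) := by
    apply monotoneOn_of_deriv_nonneg (convex_Ici b)
    · exact fun t _ => (hFd t).continuousAt.continuousWithinAt
    · exact fun t _ => (hFd t).differentiableAt.differentiableWithinAt
    · intro t ht
      rw [interior_Ici] at ht
      rw [(hFd t).deriv]
      have ht0 : 0 < t := hb.trans ht
      have h1 : Real.tanh t / t ≤ Real.tanh b / b :=
        tanh_div_antitone hb ht0 ht.le
      have hk2 : k * (2 * t) = (Real.tanh b / b) * t := by
        rw [hk]; field_simp
      rw [hk2]
      have h2 : Real.tanh t / t * t ≤ Real.tanh b / b * t :=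
        mul_le_mul_of_nonneg_right h1 ht0.le
      rw [div_mul_cancel₀ _ ht0.ne'] at h2
      linarith
  have hFa : 0 ≤ F a := by
    rcases le_or_gt a b with h | h
    · have := hanti ⟨ha, h⟩ ⟨hb.le, le_refl b⟩ h
      rw [hFb] at this; linarith
    · have := hmono (le_refl b) h.le h.le
      rw [hFb] at this; linarith
  simp only [hF] at hFa
  linarith

lemma one_add_exp (x : ℝ) :
    1 + Real.exp x = Real.exp (x / 2) * (2 * Real.cosh (x / 2)) := by
  rw [Real.cosh_eq]
  have : Real.exp (x/2) * Real.exp (x/2) = Real.exp x := by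
    rw [← Real.exp_add]; ring_nf
  have h2 : Real.exp (x/2) * Real.exp (-(x/2)) = 1 := by
    rw [← Real.exp_add]; simp
  nlinarith [this, h2]

lemma log_logistic (x : ℝ) :
    Real.log (logistic x) = x / 2 - Real.log 2 - Real.log (Real.cosh (x / 2)) := by
  unfold logistic
  have h1 : (0:ℝ) < 1 + Real.exp x := by positivity
  rw [Real.log_div (Real.exp_pos x).ne' h1.ne', Real.log_exp, one_add_exp,
    Real.log_mul (Real.exp_pos _).ne' (by positivity),
    Real.log_mul (by norm_num) (Real.cosh_pos _).ne', Real.log_exp]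
  ring


/-- For every `x ∈ ℝ` and every `η ≠ 0`,
`log Ψ(x) ≥ (x − η)/2 + log Ψ(η) − (1/(4η))·tanh(η/2)·(x² − η²)`. -/
theorem logistic_log_lower_bound (x η : ℝ) (hη : η ≠ 0) :
    Real.log (logistic x) ≥
      (x - η) / 2 + Real.log (logistic η)
        - (1 / (4 * η)) * Real.tanh (η / 2) * (x ^ 2 - η ^ 2) := by
  rw [log_logistic, log_logistic, ge_iff_le]
  have hb : 0 < |η| / 2 := by positivity
  have ha : 0 ≤ |x| / 2 := by positivity
  have key := logcosh_bound ha hb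
  rw [show |x| / 2 = |x / 2| by rw [abs_div]; norm_num] at key
  rw [show |η| / 2 = |η / 2| by rw [abs_div]; norm_num] at key
  rw [Real.cosh_abs, Real.cosh_abs] at key
  have htanh : Real.tanh |η / 2| / (2 * |η / 2|) * (|x / 2| ^ 2 - |η / 2| ^ 2)
      = 1 / (4 * η) * Real.tanh (η / 2) * (x ^ 2 - η ^ 2) := by
    rw [sq_abs]
    rcases abs_cases (η / 2) with ⟨h1, h2⟩ | ⟨h1, h2⟩
    · rw [h1]
      have hη2 : η / 2 ≠ 0 := by simpa using hη
      field_simp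
      ring
    · rw [h1, Real.tanh_neg]
      have hη2 : η / 2 ≠ 0 := by simpa using hη
      field_simp
      ring
  rw [htanh] at key
  linarith
end

section
/- Let τ, b, c > 0 satisfy τ ≥ 4bc/3. Then τ − cb > 0, and for every x > 0, τx²/(1+bx) − cx ≥ −c²/(4·√(τ(τ−cb))); moreover −c²/(4·√(τ(τ−cb))) ≥ −c²/(2τ). -/
/-- If `τ, b, c > 0` with `τ ≥ 4bc/3`, then `τ − cb > 0`, the function
`x ↦ τx²/(1+bx) − cx` is bounded below on `(0,∞)` by `−c²/(4√(τ(τ−cb)))`,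
and this lower bound is at least `−c²/(2τ)`. -/
theorem rate_function_lower_bound (τ b c : ℝ)
    (hτ : 0 < τ) (hb : 0 < b) (hc : 0 < c) (h : τ ≥ 4 * b * c / 3) :
    0 < τ - c * b ∧
    (∀ x : ℝ, 0 < x →
      τ * x ^ 2 / (1 + b * x) - c * x ≥ -c ^ 2 / (4 * Real.sqrt (τ * (τ - c * b)))) ∧
    -c ^ 2 / (4 * Real.sqrt (τ * (τ - c * b))) ≥ -c ^ 2 / (2 * τ) := by
  have hcb : c * b ≤ 3 / 4 * τ := by nlinarith
  have hpos : 0 < τ - c * b := by nlinarith [mul_pos hb hc]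
  set s := Real.sqrt (τ * (τ - c * b)) with hs_def
  have hs0 : 0 ≤ s := Real.sqrt_nonneg _
  have hs2 : s ^ 2 = τ * (τ - c * b) := Real.sq_sqrt (by positivity)
  have hs_pos : 0 < s := Real.sqrt_pos.mpr (by positivity)
  have hs_le : s ≤ τ := by
    rw [hs_def]
    calc Real.sqrt (τ * (τ - c * b)) ≤ Real.sqrt (τ * τ) :=
          Real.sqrt_le_sqrt (by nlinarith [mul_pos (mul_pos hc hb) hτ])
      _ = τ := Real.sqrt_mul_self hτ.le
  have hs_ge : τ / 2 ≤ s := by nlinarith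
  -- the discriminant condition
  have hquad : s ^ 2 - 6 * s * τ + τ ^ 2 ≤ 0 := by
    nlinarith [mul_nonneg (by linarith : (0:ℝ) ≤ s - τ / 2) (by linarith : (0:ℝ) ≤ τ - s)]
  have key : (4 * s + c * b) ^ 2 ≤ 16 * s * τ := by
    have h1 : τ ^ 4 + 14 * s ^ 2 * τ ^ 2 + s ^ 4 ≤ 8 * s * τ * (s ^ 2 + τ ^ 2) := by
      nlinarith [mul_nonneg (sq_nonneg (s - τ)) (by linarith : (0:ℝ) ≤ 6 * s * τ - s ^ 2 - τ ^ 2)]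
    -- c*b = (τ^2 - s^2)/τ
    have hcbτ : c * b * τ = τ ^ 2 - s ^ 2 := by nlinarith
    nlinarith [sq_nonneg τ, mul_pos hτ hτ, sq_nonneg (s - τ),
      mul_pos (mul_pos hτ hτ) hτ]
  refine ⟨hpos, ?_, ?_⟩
  · intro x hx
    have hbx : 0 < 1 + b * x := by positivity
    have h4s : 0 < 4 * s := by linarith
    have hquadx : 4 * s * (τ - c * b) * x ^ 2 - (4 * s * c - c ^ 2 * b) * x + c ^ 2 ≥ 0 := by
      have hA : 0 < 4 * s * (τ - c * b) := by positivity
      have hdisc : (4 * s * c - c ^ 2 * b) ^ 2 ≤ 4 * (4 * s * (τ - c * b)) * c ^ 2 := by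
        nlinarith [sq_nonneg c, mul_pos hc hc]
      nlinarith [sq_nonneg (2 * (4 * s * (τ - c * b)) * x - (4 * s * c - c ^ 2 * b))]
    have h1 : τ * x ^ 2 / (1 + b * x) - c * x - -c ^ 2 / (4 * s) =
        (4 * s * (τ - c * b) * x ^ 2 - (4 * s * c - c ^ 2 * b) * x + c ^ 2) /
          ((1 + b * x) * (4 * s)) := by
      field_simp
      ring
    rw [ge_iff_le, ← sub_nonneg, h1]
    exact div_nonneg hquadx (by positivity)
  · rw [ge_iff_le, div_le_div_iff₀ (by positivity) (by positivity)]
    nlinarith [sq_nonneg c]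
end

section
/- Let X ∈ ℝ^{n×p} have nonzero columns and θ₀ ∈ ℝ^p with s₀ = |S_{θ₀}| ≥ 1. Suppose ‖Xθ₀‖_∞ ≤ R for some R > 0 and min_{1≤i≠j≤p} ‖X_{·i}‖₂/‖X_{·j}‖₂ ≥ η > 0, and set δ_R = e^{−R}(2−e^{−R})/4. Then for every integer s with 1 ≤ s ≤ p: (i) κ̄(s) ≤ 1 + s·mc(X); (ii) κ ≥ δ_R·(η² − 64·s₀·mc(X)); (iii) κ(s) ≥ δ_R·(η² − s·mc(X)). -/
open scoped Classical

/-- Squared ℓ₂-norm of the `j`-th column of `X`. -/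
noncomputable def colNormSq {n p : ℕ} (X : Fin n → Fin p → ℝ) (j : Fin p) : ℝ :=
  ∑ i, (X i j) ^ 2

/-- `‖X‖²`, the square of the largest column ℓ₂-norm of `X`. -/
noncomputable def XnormSq {n p : ℕ} (X : Fin n → Fin p → ℝ) : ℝ :=
  ⨆ j, colNormSq X j

/-- The mutual coherence `mc(X)`. -/
noncomputable def mutualCoherence {n p : ℕ} (X : Fin n → Fin p → ℝ) : ℝ :=
  sSup {r : ℝ | ∃ i j : Fin p, i ≠ j ∧
    r = |∑ k, X k i * X k j| / (Real.sqrt (colNormSq X i) * Real.sqrt (colNormSq X j))}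

/-- The size of the support `S_θ = {j : θ_j ≠ 0}`. -/
noncomputable def suppCard {p : ℕ} (θ : Fin p → ℝ) : ℕ :=
  (Finset.univ.filter fun j => θ j ≠ 0).card

/-- `κ̄(s) = sup{‖Xθ‖₂²/(‖X‖²‖θ‖₂²) : θ ≠ 0, |S_θ| ≤ s}`. -/
noncomputable def kappaBar {n p : ℕ} (X : Fin n → Fin p → ℝ) (s : ℝ) : ℝ :=
  sSup {r : ℝ | ∃ θ : Fin p → ℝ, θ ≠ 0 ∧ (suppCard θ : ℝ) ≤ s ∧
    r = (∑ i, (∑ j, X i j * θ j) ^ 2) / (XnormSq X * ∑ j, (θ j) ^ 2)}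

/-- The diagonal weight `W_ii = Ψ(x_iᵀθ₀)(1−Ψ(x_iᵀθ₀))`. -/
noncomputable def Wdiag {n p : ℕ} (X : Fin n → Fin p → ℝ) (θ₀ : Fin p → ℝ) (i : Fin n) : ℝ :=
  logistic (∑ j, X i j * θ₀ j) * (1 - logistic (∑ j, X i j * θ₀ j))

/-- `κ(s) = inf{‖W^{1/2}Xθ‖₂²/(‖X‖²‖θ‖₂²) : θ ≠ 0, |S_θ| ≤ s}`. -/
noncomputable def kappaLow {n p : ℕ} (X : Fin n → Fin p → ℝ) (θ₀ : Fin p → ℝ) (s : ℝ) : ℝ :=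
  sInf {r : ℝ | ∃ θ : Fin p → ℝ, θ ≠ 0 ∧ (suppCard θ : ℝ) ≤ s ∧
    r = (∑ i, Wdiag X θ₀ i * (∑ j, X i j * θ j) ^ 2) / (XnormSq X * ∑ j, (θ j) ^ 2)}

/-- The compatibility constant
`κ = inf{‖W^{1/2}Xθ‖₂²/(‖X‖²‖θ‖₂²) : θ ≠ 0, ‖θ_{S₀ᶜ}‖₁ ≤ 7‖θ_{S₀}‖₁}`. -/
noncomputable def kappaComp {n p : ℕ} (X : Fin n → Fin p → ℝ) (θ₀ : Fin p → ℝ) : ℝ :=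
  sInf {r : ℝ | ∃ θ : Fin p → ℝ, θ ≠ 0 ∧
    (∑ j ∈ Finset.univ.filter (fun j => θ₀ j = 0), |θ j|)
      ≤ 7 * ∑ j ∈ Finset.univ.filter (fun j => θ₀ j ≠ 0), |θ j| ∧
    r = (∑ i, Wdiag X θ₀ i * (∑ j, X i j * θ j) ^ 2) / (XnormSq X * ∑ j, (θ j) ^ 2)}


lemma logistic_self_bound (R t : ℝ) (hR : 0 < R) (ht : |t| ≤ R) :
    Real.exp (-R) * (2 - Real.exp (-R)) / 4 ≤ logistic t * (1 - logistic t) := by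
  set a := Real.exp t with ha
  have hapos : 0 < a := Real.exp_pos t
  have h1a : 0 < 1 + a := by linarith
  have heq : logistic t * (1 - logistic t) = a / (1 + a) ^ 2 := by
    unfold logistic
    rw [← ha]
    have h1a' : (1 + a) ≠ 0 := ne_of_gt h1a
    field_simp
    ring_nf
  rw [heq]
  set u := Real.exp (-R) with hu
  have hupos : 0 < u := Real.exp_pos _
  have hu1 : u < 1 := by
    rw [hu]; exact Real.exp_lt_one_iff.mpr (by linarith)
  have hua : u ≤ a := by
    rw [hu, ha]; exact Real.exp_le_exp.mpr (by cases abs_le.mp ht; linarith)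
  have hau : u * a ≤ 1 := by
    have : a ≤ Real.exp R := Real.exp_le_exp.mpr (abs_le.mp ht).2
    have h2 : u * Real.exp R = 1 := by
      rw [hu, ← Real.exp_add]; simp
    nlinarith
  rw [div_le_div_iff₀ (by norm_num) (by positivity)]
  nlinarith [mul_nonneg (sub_nonneg.mpr hua) (sub_nonneg.mpr hau),
    mul_nonneg (mul_nonneg (sq_nonneg (1 - u)) (by linarith : (0:ℝ) ≤ 2 + u)) hapos.le]

section
variable {n p : ℕ} (X : Fin n → Fin p → ℝ)

lemma colNormSq_nonneg (j : Fin p) : 0 ≤ colNormSq X j :=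
  Finset.sum_nonneg fun i _ => sq_nonneg _

lemma colNormSq_pos (hX : ∀ j, (fun i => X i j) ≠ 0) (j : Fin p) : 0 < colNormSq X j := by
  have : ∃ i, X i j ≠ 0 := by
    by_contra h
    push_neg at h
    exact hX j (funext fun i => h i)
  obtain ⟨i, hi⟩ := this
  exact Finset.sum_pos' (fun k _ => sq_nonneg _) ⟨i, Finset.mem_univ i, by positivity⟩

lemma gram_abs_le (i j : Fin p) :
    |∑ k, X k i * X k j| ≤ Real.sqrt (colNormSq X i) * Real.sqrt (colNormSq X j) := by
  have h := Finset.sum_mul_sq_le_sq_mul_sq Finset.univ (fun k => X k i) (fun k => X k j)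
  calc |∑ k, X k i * X k j| = Real.sqrt ((∑ k, X k i * X k j) ^ 2) := by
        rw [Real.sqrt_sq_eq_abs]
    _ ≤ Real.sqrt (colNormSq X i * colNormSq X j) := Real.sqrt_le_sqrt h
    _ = _ := Real.sqrt_mul (colNormSq_nonneg X i) _

lemma mc_mem_nonempty (hp : 2 ≤ p) :
    {r : ℝ | ∃ i j : Fin p, i ≠ j ∧
      r = |∑ k, X k i * X k j| / (Real.sqrt (colNormSq X i) * Real.sqrt (colNormSq X j))}.Nonempty := by
  refine ⟨_, ⟨0, by omega⟩, ⟨1, by omega⟩, ?_, rfl⟩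
  simp [Fin.ext_iff]

lemma mc_bddAbove :
    BddAbove {r : ℝ | ∃ i j : Fin p, i ≠ j ∧
      r = |∑ k, X k i * X k j| / (Real.sqrt (colNormSq X i) * Real.sqrt (colNormSq X j))} := by
  refine ⟨1, fun r hr => ?_⟩
  obtain ⟨i, j, hij, rfl⟩ := hr
  rcases eq_or_lt_of_le (mul_nonneg (Real.sqrt_nonneg (colNormSq X i)) (Real.sqrt_nonneg (colNormSq X j))) with h | h
  · rw [← h, div_zero]; norm_num
  · rw [div_le_one h]
    simpa using gram_abs_le X i j

lemma mc_nonneg (hp : 2 ≤ p) : 0 ≤ mutualCoherence X := by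
  obtain ⟨r, hr⟩ := mc_mem_nonempty X hp
  have hle := le_csSup (mc_bddAbove X) hr
  obtain ⟨i, j, hij, rfl⟩ := hr
  exact le_trans (by positivity) hle

lemma gram_le_mc (hX : ∀ j, (fun i => X i j) ≠ 0) (i j : Fin p) (hij : i ≠ j) :
    |∑ k, X k i * X k j| ≤ mutualCoherence X *
      (Real.sqrt (colNormSq X i) * Real.sqrt (colNormSq X j)) := by
  have hd : 0 < Real.sqrt (colNormSq X i) * Real.sqrt (colNormSq X j) := by
    have := colNormSq_pos X hX i
    have := colNormSq_pos X hX j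
    positivity
  have hmem : |∑ k, X k i * X k j| / (Real.sqrt (colNormSq X i) * Real.sqrt (colNormSq X j))
      ∈ {r : ℝ | ∃ i j : Fin p, i ≠ j ∧
      r = |∑ k, X k i * X k j| / (Real.sqrt (colNormSq X i) * Real.sqrt (colNormSq X j))} :=
    ⟨i, j, hij, rfl⟩
  have h2 := le_csSup (mc_bddAbove X) hmem
  rw [div_le_iff₀ hd] at h2
  unfold mutualCoherence
  exact h2

lemma colNormSq_le_XnormSq [NeZero p] (j : Fin p) : colNormSq X j ≤ XnormSq X :=
  le_ciSup (Set.Finite.bddAbove (Set.finite_range _)) j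

lemma exists_XnormSq_eq [NeZero p] : ∃ j, XnormSq X = colNormSq X j := by
  obtain ⟨j, hj⟩ := Finite.exists_max (colNormSq X)
  exact ⟨j, le_antisymm (ciSup_le hj) (le_ciSup (Set.Finite.bddAbove (Set.finite_range _)) j)⟩

lemma XnormSq_pos [NeZero p] (hX : ∀ j, (fun i => X i j) ≠ 0) : 0 < XnormSq X := by
  obtain ⟨j, hj⟩ := exists_XnormSq_eq X
  rw [hj]; exact colNormSq_pos X hX j

lemma eta_le_one (hp : 2 ≤ p) (hX : ∀ j, (fun i => X i j) ≠ 0) (η : ℝ) (hη : 0 < η)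
    (hratio : ∀ i j : Fin p, i ≠ j →
      η ≤ Real.sqrt (colNormSq X i) / Real.sqrt (colNormSq X j)) : η ≤ 1 := by
  set i : Fin p := ⟨0, by omega⟩
  set j : Fin p := ⟨1, by omega⟩
  have hij : i ≠ j := by simp [i, j, Fin.ext_iff]
  have h1 := hratio i j hij
  have h2 := hratio j i hij.symm
  have hci : 0 < Real.sqrt (colNormSq X i) := Real.sqrt_pos.mpr (colNormSq_pos X hX i)
  have hcj : 0 < Real.sqrt (colNormSq X j) := Real.sqrt_pos.mpr (colNormSq_pos X hX j)
  rw [le_div_iff₀ hcj] at h1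
  rw [le_div_iff₀ hci] at h2
  nlinarith [mul_pos hci hcj]

lemma colNormSq_ge [NeZero p] (hp : 2 ≤ p) (hX : ∀ j, (fun i => X i j) ≠ 0) (η : ℝ) (hη : 0 < η)
    (hratio : ∀ i j : Fin p, i ≠ j →
      η ≤ Real.sqrt (colNormSq X i) / Real.sqrt (colNormSq X j)) (j : Fin p) :
    η ^ 2 * XnormSq X ≤ colNormSq X j := by
  obtain ⟨j₀, hj₀⟩ := exists_XnormSq_eq X
  have hle1 := eta_le_one X hp hX η hη hratio
  rcases eq_or_ne j j₀ with rfl | hne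
  · rw [← hj₀]
    nlinarith [XnormSq_pos X hX, mul_le_mul hle1 hle1 hη.le zero_le_one]
  · have h := hratio j j₀ hne
    have hcj : 0 < Real.sqrt (colNormSq X j) := Real.sqrt_pos.mpr (colNormSq_pos X hX j)
    have hcj₀ : 0 < Real.sqrt (colNormSq X j₀) := Real.sqrt_pos.mpr (colNormSq_pos X hX j₀)
    rw [le_div_iff₀ hcj₀] at h
    have h2 : (η * Real.sqrt (colNormSq X j₀)) ^ 2 ≤ Real.sqrt (colNormSq X j) ^ 2 := by
      apply sq_le_sq' _ h
      nlinarith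
    rw [mul_pow, Real.sq_sqrt (colNormSq_nonneg X j₀), Real.sq_sqrt (colNormSq_nonneg X j)] at h2
    rw [hj₀]
    exact h2

lemma quad_expand (θ : Fin p → ℝ) :
    ∑ i, (∑ j, X i j * θ j) ^ 2
      = ∑ j, ∑ k, θ j * θ k * ∑ i, X i j * X i k := by
  have h1 : ∀ i : Fin n, (∑ j, X i j * θ j) ^ 2
      = ∑ j, ∑ k, (X i j * θ j) * (X i k * θ k) := by
    intro i; rw [sq, Finset.sum_mul_sum]
  calc ∑ i, (∑ j, X i j * θ j) ^ 2
      = ∑ i, ∑ j, ∑ k, (X i j * θ j) * (X i k * θ k) := Finset.sum_congr rfl fun i _ => h1 i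
    _ = ∑ j, ∑ i, ∑ k, (X i j * θ j) * (X i k * θ k) := Finset.sum_comm
    _ = ∑ j, ∑ k, ∑ i, (X i j * θ j) * (X i k * θ k) :=
        Finset.sum_congr rfl fun j _ => Finset.sum_comm
    _ = ∑ j, ∑ k, θ j * θ k * ∑ i, X i j * X i k := by
        refine Finset.sum_congr rfl fun j _ => Finset.sum_congr rfl fun k _ => ?_
        rw [Finset.mul_sum]
        exact Finset.sum_congr rfl fun i _ => by ring

lemma offdiag_abs_sum (θ : Fin p → ℝ) :
    ∑ j, ∑ k ∈ Finset.univ.erase j, |θ j| * |θ k|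
      = (∑ j, |θ j|) ^ 2 - ∑ j, (θ j) ^ 2 := by
  have h1 : ∀ j : Fin p, ∑ k ∈ Finset.univ.erase j, |θ j| * |θ k|
      = |θ j| * (∑ k, |θ k|) - (θ j) ^ 2 := by
    intro j
    rw [← Finset.mul_sum, Finset.sum_erase_eq_sub (Finset.mem_univ j), mul_sub]
    congr 1
    simpa [sq] using abs_mul_abs_self (θ j)
  rw [Finset.sum_congr rfl fun j _ => h1 j, Finset.sum_sub_distrib, ← Finset.sum_mul, sq]

lemma quad_bounds [NeZero p] (hp : 2 ≤ p) (hX : ∀ j, (fun i => X i j) ≠ 0)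
    (η : ℝ) (hη : 0 < η)
    (hratio : ∀ i j : Fin p, i ≠ j →
      η ≤ Real.sqrt (colNormSq X i) / Real.sqrt (colNormSq X j)) (θ : Fin p → ℝ) :
    XnormSq X * (η ^ 2 * ∑ j, (θ j) ^ 2)
        - mutualCoherence X * XnormSq X * ((∑ j, |θ j|) ^ 2 - ∑ j, (θ j) ^ 2)
      ≤ ∑ i, (∑ j, X i j * θ j) ^ 2 ∧
    ∑ i, (∑ j, X i j * θ j) ^ 2
      ≤ XnormSq X * (∑ j, (θ j) ^ 2)
        + mutualCoherence X * XnormSq X * ((∑ j, |θ j|) ^ 2 - ∑ j, (θ j) ^ 2) := by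
  set G : Fin p → Fin p → ℝ := fun j k => ∑ i, X i j * X i k with hG
  have hXn := XnormSq_pos X hX
  have hmc := mc_nonneg X hp
  have hsplit : ∑ i, (∑ j, X i j * θ j) ^ 2
      = (∑ j, (θ j) ^ 2 * colNormSq X j)
        + ∑ j, ∑ k ∈ Finset.univ.erase j, θ j * θ k * G j k := by
    rw [quad_expand X θ, ← Finset.sum_add_distrib]
    refine Finset.sum_congr rfl fun j _ => ?_
    rw [← Finset.add_sum_erase Finset.univ (fun k => θ j * θ k * G j k) (Finset.mem_univ j)]
    congr 1
    unfold colNormSq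
    rw [Finset.mul_sum, Finset.mul_sum]
    exact Finset.sum_congr rfl fun i _ => by ring
  -- off-diagonal term bound
  have hterm : ∀ j k : Fin p, j ≠ k → |θ j * θ k * G j k|
      ≤ mutualCoherence X * XnormSq X * (|θ j| * |θ k|) := by
    intro j k hjk
    rw [abs_mul, abs_mul]
    have h1 : |G j k| ≤ mutualCoherence X * XnormSq X := by
      calc |G j k| ≤ mutualCoherence X *
            (Real.sqrt (colNormSq X j) * Real.sqrt (colNormSq X k)) :=
          gram_le_mc X hX j k hjk
        _ ≤ mutualCoherence X * XnormSq X := by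
            apply mul_le_mul_of_nonneg_left _ hmc
            calc Real.sqrt (colNormSq X j) * Real.sqrt (colNormSq X k)
                ≤ Real.sqrt (XnormSq X) * Real.sqrt (XnormSq X) := by
                  apply mul_le_mul (Real.sqrt_le_sqrt (colNormSq_le_XnormSq X j))
                    (Real.sqrt_le_sqrt (colNormSq_le_XnormSq X k))
                    (Real.sqrt_nonneg _) (Real.sqrt_nonneg _)
              _ = XnormSq X := Real.mul_self_sqrt hXn.le
    calc |θ j| * |θ k| * |G j k| ≤ |θ j| * |θ k| * (mutualCoherence X * XnormSq X) := by
          apply mul_le_mul_of_nonneg_left h1 (by positivity)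
      _ = mutualCoherence X * XnormSq X * (|θ j| * |θ k|) := by ring
  have hoff : |∑ j, ∑ k ∈ Finset.univ.erase j, θ j * θ k * G j k|
      ≤ mutualCoherence X * XnormSq X * ((∑ j, |θ j|) ^ 2 - ∑ j, (θ j) ^ 2) := by
    calc |∑ j, ∑ k ∈ Finset.univ.erase j, θ j * θ k * G j k|
        ≤ ∑ j, |∑ k ∈ Finset.univ.erase j, θ j * θ k * G j k| :=
          Finset.abs_sum_le_sum_abs _ _
      _ ≤ ∑ j, ∑ k ∈ Finset.univ.erase j, |θ j * θ k * G j k| :=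
          Finset.sum_le_sum fun j _ => Finset.abs_sum_le_sum_abs _ _
      _ ≤ ∑ j, ∑ k ∈ Finset.univ.erase j, mutualCoherence X * XnormSq X * (|θ j| * |θ k|) := by
          refine Finset.sum_le_sum fun j _ => Finset.sum_le_sum fun k hk => ?_
          exact hterm j k (Finset.ne_of_mem_erase hk).symm
      _ = mutualCoherence X * XnormSq X * ((∑ j, |θ j|) ^ 2 - ∑ j, (θ j) ^ 2) := by
          rw [← offdiag_abs_sum θ, Finset.mul_sum]
          exact Finset.sum_congr rfl fun j _ => (Finset.mul_sum _ _ _).symm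
  have hdiag_up : ∑ j, (θ j) ^ 2 * colNormSq X j ≤ XnormSq X * ∑ j, (θ j) ^ 2 := by
    rw [Finset.mul_sum]
    refine Finset.sum_le_sum fun j _ => ?_
    rw [mul_comm (XnormSq X)]
    exact mul_le_mul_of_nonneg_left (colNormSq_le_XnormSq X j) (sq_nonneg _)
  have hdiag_lo : XnormSq X * (η ^ 2 * ∑ j, (θ j) ^ 2) ≤ ∑ j, (θ j) ^ 2 * colNormSq X j := by
    rw [Finset.mul_sum, Finset.mul_sum]
    refine Finset.sum_le_sum fun j _ => ?_
    have := colNormSq_ge X hp hX η hη hratio j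
    nlinarith [sq_nonneg (θ j)]
  have habs := abs_le.mp hoff
  constructor
  · rw [hsplit]; linarith [habs.1]
  · rw [hsplit]; linarith [habs.2]

end


lemma l1_sq_T_le {p : ℕ} (θ : Fin p → ℝ) (s : ℕ) (hcard : (suppCard θ : ℝ) ≤ s) :
    (∑ j, |θ j|) ^ 2 - ∑ j, (θ j) ^ 2 ≤ (s : ℝ) * ∑ j, (θ j) ^ 2 := by
  classical
  set S := Finset.univ.filter fun j => θ j ≠ 0 with hS
  have hsum0 : 0 ≤ ∑ j, (θ j) ^ 2 := Finset.sum_nonneg fun j _ => sq_nonneg _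
  have h0 : ∑ j, |θ j| = ∑ j ∈ S, |θ j| := by
    refine (Finset.sum_subset (Finset.filter_subset _ _) fun j _ hj => ?_).symm
    simp only [hS, Finset.mem_filter, Finset.mem_univ, true_and, not_not] at hj
    simp [hj]
  have h1 : (∑ j ∈ S, |θ j|) ^ 2 ≤ (S.card : ℝ) * ∑ j ∈ S, |θ j| ^ 2 :=
    sq_sum_le_card_mul_sum_sq
  have h2 : ∑ j ∈ S, |θ j| ^ 2 ≤ ∑ j, (θ j) ^ 2 := by
    rw [Finset.sum_congr rfl fun j _ => sq_abs (θ j)]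
    exact Finset.sum_le_sum_of_subset_of_nonneg (Finset.filter_subset _ _)
      fun j _ _ => sq_nonneg _
  have hc : (S.card : ℝ) ≤ (s : ℝ) := hcard
  have hcn : (0:ℝ) ≤ S.card := Nat.cast_nonneg _
  have h0sq : (∑ j, |θ j|) ^ 2 = (∑ j ∈ S, |θ j|) ^ 2 := by rw [h0]
  nlinarith [mul_le_mul_of_nonneg_left h2 hcn, mul_le_mul_of_nonneg_right hc hsum0]

lemma l1_sq_T_le_comp {p : ℕ} (θ θ₀ : Fin p → ℝ)
    (h7 : (∑ j ∈ Finset.univ.filter (fun j => θ₀ j = 0), |θ j|)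
      ≤ 7 * ∑ j ∈ Finset.univ.filter (fun j => θ₀ j ≠ 0), |θ j|) :
    (∑ j, |θ j|) ^ 2 - ∑ j, (θ j) ^ 2
      ≤ 64 * (suppCard θ₀ : ℝ) * ∑ j, (θ j) ^ 2 := by
  classical
  set S := Finset.univ.filter fun j => θ₀ j ≠ 0 with hS
  have hsum0 : 0 ≤ ∑ j, (θ j) ^ 2 := Finset.sum_nonneg fun j _ => sq_nonneg _
  have hsplit : ∑ j, |θ j| = (∑ j ∈ S, |θ j|)
      + ∑ j ∈ Finset.univ.filter (fun j => θ₀ j = 0), |θ j| := by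
    rw [hS, ← Finset.sum_filter_add_sum_filter_not Finset.univ (fun j => θ₀ j ≠ 0)
      (fun j => |θ j|)]
    congr 1
    apply Finset.sum_congr _ fun _ _ => rfl
    apply Finset.filter_congr
    intro j _
    simp
  have hl1 : ∑ j, |θ j| ≤ 8 * ∑ j ∈ S, |θ j| := by
    rw [hsplit]; linarith
  have hSnn : 0 ≤ ∑ j ∈ S, |θ j| := Finset.sum_nonneg fun j _ => abs_nonneg _
  have hl1nn : 0 ≤ ∑ j, |θ j| := Finset.sum_nonneg fun j _ => abs_nonneg _
  have h1 : (∑ j ∈ S, |θ j|) ^ 2 ≤ (S.card : ℝ) * ∑ j ∈ S, |θ j| ^ 2 :=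
    sq_sum_le_card_mul_sum_sq
  have h2 : ∑ j ∈ S, |θ j| ^ 2 ≤ ∑ j, (θ j) ^ 2 := by
    rw [Finset.sum_congr rfl fun j _ => sq_abs (θ j)]
    exact Finset.sum_le_sum_of_subset_of_nonneg (Finset.filter_subset _ _)
      fun j _ _ => sq_nonneg _
  have hcard : (S.card : ℝ) = (suppCard θ₀ : ℝ) := by rw [hS, suppCard]
  have hcn : (0:ℝ) ≤ (S.card : ℝ) := Nat.cast_nonneg _
  nlinarith [mul_le_mul hl1 hl1 hl1nn (by linarith : (0:ℝ) ≤ 8 * ∑ j ∈ S, |θ j|),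
    mul_le_mul_of_nonneg_left h2 hcn]

/-- Bounds on the compatibility constants in terms of the mutual coherence. -/
theorem compatibility_mutual_coherence_bounds {n p : ℕ} (hp : 2 ≤ p)
    (X : Fin n → Fin p → ℝ) (hX : ∀ j, (fun i => X i j) ≠ 0)
    (θ₀ : Fin p → ℝ) (hs₀ : 1 ≤ suppCard θ₀)
    (R : ℝ) (hR : 0 < R) (hbound : ∀ i, |∑ j, X i j * θ₀ j| ≤ R)
    (η : ℝ) (hη : 0 < η)
    (hratio : ∀ i j : Fin p, i ≠ j →
      η ≤ Real.sqrt (colNormSq X i) / Real.sqrt (colNormSq X j)) :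
    ∀ s : ℕ, 1 ≤ s → s ≤ p →
      kappaBar X s ≤ 1 + (s : ℝ) * mutualCoherence X ∧
      kappaComp X θ₀
        ≥ (Real.exp (-R) * (2 - Real.exp (-R)) / 4)
            * (η ^ 2 - 64 * (suppCard θ₀ : ℝ) * mutualCoherence X) ∧
      kappaLow X θ₀ s
        ≥ (Real.exp (-R) * (2 - Real.exp (-R)) / 4)
            * (η ^ 2 - (s : ℝ) * mutualCoherence X) := by
  intro s hs1 hsp
  have hnz : NeZero p := ⟨by omega⟩
  have hu0 : 0 < Real.exp (-R) := Real.exp_pos _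
  have hu1 : Real.exp (-R) < 1 := Real.exp_lt_one_iff.mpr (by linarith)
  have hδ : 0 < Real.exp (-R) * (2 - Real.exp (-R)) / 4 := by nlinarith
  set δ := Real.exp (-R) * (2 - Real.exp (-R)) / 4 with hδdef
  have hXn := XnormSq_pos X hX
  have hmc := mc_nonneg X hp
  set mc := mutualCoherence X with hmcdef
  have hmcXn : 0 ≤ mc * XnormSq X := mul_nonneg hmc hXn.le
  have hsumpos : ∀ θ : Fin p → ℝ, θ ≠ 0 → 0 < ∑ j, (θ j) ^ 2 := by
    intro θ hθ
    obtain ⟨j, hj⟩ := Function.ne_iff.mp hθ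
    have hj' : θ j ≠ 0 := by simpa using hj
    exact Finset.sum_pos' (fun k _ => sq_nonneg _) ⟨j, Finset.mem_univ j, by positivity⟩
  have hW : ∀ (θ : Fin p → ℝ) (i : Fin n),
      δ * (∑ j, X i j * θ j) ^ 2 ≤ Wdiag X θ₀ i * (∑ j, X i j * θ j) ^ 2 := fun θ i =>
    mul_le_mul_of_nonneg_right (logistic_self_bound R _ hR (hbound i)) (sq_nonneg _)
  -- basis-vector witnesses
  have he0 : ∀ j₀ : Fin p, (fun k => if k = j₀ then (1:ℝ) else 0) ≠ 0 := by
    intro j₀ h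
    have := congrFun h j₀
    simp at this
  have hesupp : ∀ j₀ : Fin p, suppCard (fun k => if k = j₀ then (1:ℝ) else 0) = 1 := by
    intro j₀
    unfold suppCard
    have : (Finset.univ.filter fun j => (if j = j₀ then (1:ℝ) else 0) ≠ 0) = {j₀} := by
      ext k
      by_cases hk : k = j₀ <;> simp [hk]
    rw [this, Finset.card_singleton]
  obtain ⟨j₁, hj₁⟩ : ∃ j, θ₀ j ≠ 0 := by
    have : (Finset.univ.filter fun j => θ₀ j ≠ 0).Nonempty :=
      Finset.card_pos.mp (by unfold suppCard at hs₀; omega)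
    obtain ⟨j, hj⟩ := this
    exact ⟨j, (Finset.mem_filter.mp hj).2⟩
  refine ⟨?_, ?_, ?_⟩
  · -- kappaBar bound
    apply csSup_le
    · exact ⟨_, (fun k => if k = ⟨0, by omega⟩ then (1:ℝ) else 0), he0 _,
        by rw [hesupp]; exact_mod_cast hs1, rfl⟩
    · rintro r ⟨θ, hθ, hcard, rfl⟩
      have hsum := hsumpos θ hθ
      have hD : 0 < XnormSq X * ∑ j, (θ j) ^ 2 := mul_pos hXn hsum
      rw [div_le_iff₀ hD]
      have hub := (quad_bounds X hp hX η hη hratio θ).2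
      have hT := l1_sq_T_le θ s hcard
      nlinarith [mul_le_mul_of_nonneg_left hT hmcXn]
  · -- kappaComp bound
    rw [ge_iff_le]
    apply le_csInf
    · refine ⟨_, (fun k => if k = j₁ then (1:ℝ) else 0), he0 _, ?_, rfl⟩
      have hz : (∑ j ∈ Finset.univ.filter (fun j => θ₀ j = 0),
          |if j = j₁ then (1:ℝ) else 0|) = 0 := by
        apply Finset.sum_eq_zero
        intro j hj
        have : θ₀ j = 0 := (Finset.mem_filter.mp hj).2
        have hne : j ≠ j₁ := fun h => hj₁ (h ▸ this)
        simp [hne]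
      rw [hz]
      positivity
    · rintro r ⟨θ, hθ, h7, rfl⟩
      have hsum := hsumpos θ hθ
      have hD : 0 < XnormSq X * ∑ j, (θ j) ^ 2 := mul_pos hXn hsum
      rw [le_div_iff₀ hD]
      have hlb := (quad_bounds X hp hX η hη hratio θ).1
      have hT := l1_sq_T_le_comp θ θ₀ h7
      have h1 : mc * XnormSq X * ((∑ j, |θ j|) ^ 2 - ∑ j, (θ j) ^ 2)
          ≤ mc * XnormSq X * (64 * (suppCard θ₀ : ℝ) * ∑ j, (θ j) ^ 2) :=
        mul_le_mul_of_nonneg_left hT hmcXn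
      have h2 : XnormSq X * (η ^ 2 * ∑ j, (θ j) ^ 2)
            - mc * XnormSq X * (64 * (suppCard θ₀ : ℝ) * ∑ j, (θ j) ^ 2)
          ≤ ∑ i, (∑ j, X i j * θ j) ^ 2 := by linarith
      have h3 := mul_le_mul_of_nonneg_left h2 hδ.le
      have hnum : δ * ∑ i, (∑ j, X i j * θ j) ^ 2
          ≤ ∑ i, Wdiag X θ₀ i * (∑ j, X i j * θ j) ^ 2 := by
        rw [Finset.mul_sum]
        exact Finset.sum_le_sum fun i _ => hW θ i
      calc δ * (η ^ 2 - 64 * (suppCard θ₀ : ℝ) * mc) * (XnormSq X * ∑ j, (θ j) ^ 2)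
          = δ * (XnormSq X * (η ^ 2 * ∑ j, (θ j) ^ 2)
              - mc * XnormSq X * (64 * (suppCard θ₀ : ℝ) * ∑ j, (θ j) ^ 2)) := by ring
        _ ≤ δ * ∑ i, (∑ j, X i j * θ j) ^ 2 := h3
        _ ≤ _ := hnum
  · -- kappaLow bound
    rw [ge_iff_le]
    apply le_csInf
    · exact ⟨_, (fun k => if k = ⟨0, by omega⟩ then (1:ℝ) else 0), he0 _,
        by rw [hesupp]; exact_mod_cast hs1, rfl⟩
    · rintro r ⟨θ, hθ, hcard, rfl⟩
      have hsum := hsumpos θ hθ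
      have hD : 0 < XnormSq X * ∑ j, (θ j) ^ 2 := mul_pos hXn hsum
      rw [le_div_iff₀ hD]
      have hlb := (quad_bounds X hp hX η hη hratio θ).1
      have hT := l1_sq_T_le θ s hcard
      have h1 : mc * XnormSq X * ((∑ j, |θ j|) ^ 2 - ∑ j, (θ j) ^ 2)
          ≤ mc * XnormSq X * ((s : ℝ) * ∑ j, (θ j) ^ 2) :=
        mul_le_mul_of_nonneg_left hT hmcXn
      have h2 : XnormSq X * (η ^ 2 * ∑ j, (θ j) ^ 2)
            - mc * XnormSq X * ((s : ℝ) * ∑ j, (θ j) ^ 2)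
          ≤ ∑ i, (∑ j, X i j * θ j) ^ 2 := by linarith
      have h3 := mul_le_mul_of_nonneg_left h2 hδ.le
      have hnum : δ * ∑ i, (∑ j, X i j * θ j) ^ 2
          ≤ ∑ i, Wdiag X θ₀ i * (∑ j, X i j * θ j) ^ 2 := by
        rw [Finset.mul_sum]
        exact Finset.sum_le_sum fun i _ => hW θ i
      calc δ * (η ^ 2 - (s : ℝ) * mc) * (XnormSq X * ∑ j, (θ j) ^ 2)
          = δ * (XnormSq X * (η ^ 2 * ∑ j, (θ j) ^ 2)
              - mc * XnormSq X * ((s : ℝ) * ∑ j, (θ j) ^ 2)) := by ring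
        _ ≤ δ * ∑ i, (∑ j, X i j * θ j) ^ 2 := h3
        _ ≤ _ := hnum
end

section
/- For every θ, θ₀ ∈ ℝ^p and every y ∈ ℝ^n, the first-order Taylor remainder of the logistic log-likelihood satisfies 𝓛_{n,θ}(y) ≥ −(1/8)·‖X(θ−θ₀)‖₂². -/
/-- The logistic log-likelihood `ℓ_{n,θ}(y) = Σᵢ [yᵢ·x_iᵀθ − log(1+e^{x_iᵀθ})]`. -/
noncomputable def loglik {n p : ℕ} (X : Fin n → Fin p → ℝ) (θ : Fin p → ℝ)
    (y : Fin n → ℝ) : ℝ :=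
  ∑ i, (y i * (∑ j, X i j * θ j) - Real.log (1 + Real.exp (∑ j, X i j * θ j)))

/-- The first-order Taylor remainder
`𝓛_{n,θ}(y) = ℓ_{n,θ}(y) − ℓ_{n,θ₀}(y) − ∇ℓ_{n,θ₀}(y)ᵀ(θ−θ₀)`. -/
noncomputable def taylorRem {n p : ℕ} (X : Fin n → Fin p → ℝ) (θ₀ θ : Fin p → ℝ)
    (y : Fin n → ℝ) : ℝ :=
  loglik X θ y - loglik X θ₀ y
    - fderiv ℝ (fun ϑ => loglik X ϑ y) θ₀ (θ - θ₀)

noncomputable def sig (t : ℝ) : ℝ := Real.exp t / (1 + Real.exp t)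

lemma one_add_exp_pos (t : ℝ) : 0 < 1 + Real.exp t := by positivity

lemma hasDerivAt_log_one_add_exp (t : ℝ) :
    HasDerivAt (fun u => Real.log (1 + Real.exp u)) (sig t) t := by
  have h := ((Real.hasDerivAt_exp t).const_add 1).log (ne_of_gt (one_add_exp_pos t))
  simpa [sig] using h

lemma hasDerivAt_sig (t : ℝ) :
    HasDerivAt sig (Real.exp t / (1 + Real.exp t) ^ 2) t := by
  have h := (Real.hasDerivAt_exp t).div ((Real.hasDerivAt_exp t).const_add 1)
    (ne_of_gt (one_add_exp_pos t))
  refine h.congr_deriv ?_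
  have := (one_add_exp_pos t).ne'
  congr 1
  ring

lemma phi_mono : Monotone (fun t => t / 4 - sig t) := by
  have hd : ∀ t, HasDerivAt (fun t => t / 4 - sig t)
      (1 / 4 - Real.exp t / (1 + Real.exp t) ^ 2) t := fun t => by
    simpa using ((hasDerivAt_id t).div_const 4).fun_sub (hasDerivAt_sig t)
  apply monotone_of_deriv_nonneg (fun t => (hd t).differentiableAt)
  intro t
  rw [(hd t).deriv]
  have h1 := Real.exp_pos t
  have h2 : (1 - Real.exp t) ^ 2 ≥ 0 := sq_nonneg _
  rw [sub_nonneg, div_le_iff₀ (by positivity)]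
  nlinarith

lemma log_taylor (s t : ℝ) :
    Real.log (1 + Real.exp t) - Real.log (1 + Real.exp s) - sig s * (t - s)
      ≤ 1 / 8 * (t - s) ^ 2 := by
  set h : ℝ → ℝ := fun u =>
    1 / 8 * (u - s) ^ 2 - (Real.log (1 + Real.exp u) - Real.log (1 + Real.exp s) - sig s * (u - s))
    with hh
  have hd : ∀ u, HasDerivAt h (1 / 4 * (u - s) - (sig u - sig s)) u := by
    intro u
    have h1 : HasDerivAt (fun u : ℝ => 1 / 8 * (u - s) ^ 2) (1 / 8 * (2 * (u - s))) u := by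
      exact (((hasDerivAt_id u).sub_const s).pow 2).const_mul (1/8) |>.congr_deriv (by simp only [id_eq]; ring)
    have h2 : HasDerivAt (fun u : ℝ =>
        Real.log (1 + Real.exp u) - Real.log (1 + Real.exp s) - sig s * (u - s))
        (sig u - sig s) u := by
      have := ((hasDerivAt_log_one_add_exp u).sub_const (Real.log (1 + Real.exp s))).fun_sub
        (((hasDerivAt_id u).sub_const s).const_mul (sig s))
      simpa using this
    have := h1.fun_sub h2
    refine this.congr_deriv ?_
    ring
  have hs : h s = 0 := by simp [hh]
  have key : ∀ u, 0 ≤ h u := by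
    intro u
    rcases le_total s u with hle | hle
    · have mono : MonotoneOn h (Set.Ici s) := by
        apply monotoneOn_of_deriv_nonneg (convex_Ici s)
          (fun x _ => (hd x).differentiableAt.continuousAt.continuousWithinAt)
          (fun x _ => (hd x).differentiableAt.differentiableWithinAt)
        intro x hx
        rw [(hd x).deriv]
        have hx' : s ≤ x := le_of_lt (by simpa using hx)
        have := phi_mono hx'
        simp only at this
        linarith
      have := mono (Set.self_mem_Ici) (Set.mem_Ici.2 hle) hle
      linarith [hs ▸ this]
    · have anti : AntitoneOn h (Set.Iic s) := by
        apply antitoneOn_of_deriv_nonpos (convex_Iic s)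
          (fun x _ => (hd x).differentiableAt.continuousAt.continuousWithinAt)
          (fun x _ => (hd x).differentiableAt.differentiableWithinAt)
        intro x hx
        rw [(hd x).deriv]
        have hx' : x ≤ s := le_of_lt (by simpa using hx)
        have := phi_mono hx'
        simp only at this
        linarith
      have := anti (Set.mem_Iic.2 hle) Set.self_mem_Iic hle
      linarith [hs ▸ this]
  have := key t
  simp only [hh] at this
  linarith


noncomputable def Lrow {n p : ℕ} (X : Fin n → Fin p → ℝ) (i : Fin n) :
    (Fin p → ℝ) →L[ℝ] ℝ :=
  ∑ j, X i j • ContinuousLinearMap.proj j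

lemma Lrow_apply {n p : ℕ} (X : Fin n → Fin p → ℝ) (i : Fin n) (v : Fin p → ℝ) :
    Lrow X i v = ∑ j, X i j * v j := by
  simp [Lrow, ContinuousLinearMap.sum_apply]

lemma loglik_hasFDerivAt {n p : ℕ} (X : Fin n → Fin p → ℝ) (θ₀ : Fin p → ℝ)
    (y : Fin n → ℝ) :
    HasFDerivAt (fun ϑ => loglik X ϑ y)
      (∑ i, (y i - sig (∑ j, X i j * θ₀ j)) • Lrow X i) θ₀ := by
  have h : ∀ i : Fin n, HasFDerivAt
      (fun ϑ : Fin p → ℝ => y i * (∑ j, X i j * ϑ j)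
        - Real.log (1 + Real.exp (∑ j, X i j * ϑ j)))
      ((y i - sig (∑ j, X i j * θ₀ j)) • Lrow X i) θ₀ := by
    intro i
    have hL : HasFDerivAt (fun ϑ : Fin p → ℝ => ∑ j, X i j * ϑ j) (Lrow X i) θ₀ := by
      have : (fun ϑ : Fin p → ℝ => ∑ j, X i j * ϑ j) = ⇑(Lrow X i) := by
        ext ϑ; rw [Lrow_apply]
      rw [this]
      exact (Lrow X i).hasFDerivAt
    have hF : HasDerivAt (fun t : ℝ => y i * t - Real.log (1 + Real.exp t))
        (y i - sig (∑ j, X i j * θ₀ j)) (∑ j, X i j * θ₀ j) := by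
      simpa using ((hasDerivAt_id _).const_mul (y i)).fun_sub
        (hasDerivAt_log_one_add_exp (∑ j, X i j * θ₀ j))
    exact hF.comp_hasFDerivAt θ₀ hL
  have := HasFDerivAt.fun_sum (u := Finset.univ) (fun i _ => h i)
  simpa [loglik] using this

/-- `𝓛_{n,θ}(y) ≥ −(1/8)·‖X(θ−θ₀)‖₂²`. -/
theorem taylor_remainder_lower_bound {n p : ℕ} (X : Fin n → Fin p → ℝ)
    (θ θ₀ : Fin p → ℝ) (y : Fin n → ℝ) :
    taylorRem X θ₀ θ y ≥ -(1 / 8) * ∑ i, (∑ j, X i j * (θ j - θ₀ j)) ^ 2 := by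
  have hf := (loglik_hasFDerivAt X θ₀ y).fderiv
  rw [taylorRem, hf]
  set s : Fin n → ℝ := fun i => ∑ j, X i j * θ₀ j with hs
  set t : Fin n → ℝ := fun i => ∑ j, X i j * θ j with ht
  set d : Fin n → ℝ := fun i => ∑ j, X i j * (θ j - θ₀ j) with hd
  have hdst : ∀ i, d i = t i - s i := by
    intro i
    simp only [hd, ht, hs, mul_sub, Finset.sum_sub_distrib]
  have happ : (∑ i, (y i - sig (s i)) • Lrow X i) (θ - θ₀)
      = ∑ i, (y i - sig (s i)) * d i := by
    rw [ContinuousLinearMap.sum_apply]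
    refine Finset.sum_congr rfl fun i _ => ?_
    rw [ContinuousLinearMap.smul_apply, Lrow_apply, smul_eq_mul]
    congr 1
  rw [happ]
  have expand : loglik X θ y - loglik X θ₀ y - ∑ i, (y i - sig (s i)) * d i
      = ∑ i, -(Real.log (1 + Real.exp (t i)) - Real.log (1 + Real.exp (s i))
          - sig (s i) * (t i - s i)) := by
    rw [loglik, loglik, ← Finset.sum_sub_distrib, ← Finset.sum_sub_distrib]
    refine Finset.sum_congr rfl fun i _ => ?_
    rw [hdst i]
    ring
  have rhs : -(1 / 8) * ∑ i, d i ^ 2 = ∑ i, -(1 / 8 * d i ^ 2) := by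
    rw [Finset.mul_sum]
    exact Finset.sum_congr rfl fun i _ => by ring
  rw [expand, rhs]
  refine Finset.sum_le_sum fun i _ => ?_
  have := log_taylor (s i) (t i)
  rw [hdst i]
  linarith
end

section
/- Let g(t) = log(1+e^t), so that g'(t) = Ψ(t) and g''(t) = Ψ(t)(1−Ψ(t)). Then for all a, b ∈ ℝ, g(b) − g(a) − g'(a)(b−a) ≥ g''(a)·(b−a)²/(2 + |b−a|). Consequently, for every θ, θ₀ ∈ ℝ^p and y ∈ ℝ^n, 𝓛_{n,θ}(y) ≤ −Σ_{i=1}^n g''(x_i^Tθ₀)·|x_i^T(θ−θ₀)|²/(2 + |x_i^T(θ−θ₀)|). -/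
open Real Set

lemma hasDerivAt_logloss (t : ℝ) : HasDerivAt (fun s => Real.log (1 + Real.exp s))
    (logistic t) t := by
  have h : HasDerivAt (fun s => 1 + Real.exp s) (Real.exp t) t :=
    (Real.hasDerivAt_exp t).const_add 1
  exact h.log (by positivity)

lemma hasDerivAt_F_aux (p : ℝ) (hp : 0 ≤ p) (x : ℝ) (hx : 0 ≤ x) :
    HasDerivAt (fun x => Real.log (1 - p + p * Real.exp x) - p * x
        - p * (1 - p) * (x ^ 2 / (2 + x)))
      (p * Real.exp x / (1 - p + p * Real.exp x) - p
        - p * (1 - p) * ((x ^ 2 + 4 * x) / (2 + x) ^ 2)) x := by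
  have hD : (0:ℝ) < 1 - p + p * Real.exp x := by
    nlinarith [Real.one_le_exp hx]
  have h1 : HasDerivAt (fun x => 1 - p + p * Real.exp x) (p * Real.exp x) x := by
    simpa using ((Real.hasDerivAt_exp x).const_mul p).const_add (1 - p)
  have h2 := h1.log hD.ne'
  have h3 : HasDerivAt (fun x : ℝ => p * x) p x := by
    simpa using (hasDerivAt_id x).const_mul p
  have h4 : HasDerivAt (fun x : ℝ => x ^ 2 / (2 + x)) ((x ^ 2 + 4 * x) / (2 + x) ^ 2) x := by
    have hnum : HasDerivAt (fun x : ℝ => x ^ 2) (2 * x) x := by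
      simpa using hasDerivAt_pow 2 x
    have hden : HasDerivAt (fun x : ℝ => 2 + x) 1 x := by
      simpa using (hasDerivAt_id x).const_add 2
    have := hnum.div hden (by positivity)
    exact this.congr_deriv (by ring)
  have h5 := h4.const_mul (p * (1 - p))
  exact (h2.sub h3).sub h5

lemma derivF_nonneg_aux (p : ℝ) (hp : 0 ≤ p) (hp1 : p ≤ 1) (x : ℝ) (hx : 0 ≤ x) :
    0 ≤ p * Real.exp x / (1 - p + p * Real.exp x) - p
        - p * (1 - p) * ((x ^ 2 + 4 * x) / (2 + x) ^ 2) := by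
  have he1 : 1 ≤ Real.exp x := Real.one_le_exp hx
  have hD : (0:ℝ) < 1 - p + p * Real.exp x := by nlinarith
  have hE : (0:ℝ) < (2 + x) ^ 2 := by positivity
  have key : (x ^ 2 + 4 * x) * (1 - p + p * Real.exp x)
      ≤ (Real.exp x - 1) * (2 + x) ^ 2 := by
    have h2 : Real.exp (x/2) * Real.exp (x/2) = Real.exp x := by
      rw [← Real.exp_add]; ring_nf
    have h3 := Real.add_one_le_exp (x/2)
    have h4 : (2 + x) ^ 2 ≤ 4 * Real.exp x := by nlinarith
    have h5 : (x ^ 2 + 4 * x) * (1 - p + p * Real.exp x) ≤ (x ^ 2 + 4 * x) * Real.exp x := by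
      have : 1 - p + p * Real.exp x ≤ Real.exp x := by nlinarith
      have hx4 : 0 ≤ x ^ 2 + 4 * x := by nlinarith
      exact mul_le_mul_of_nonneg_left this hx4
    nlinarith
  have h6 : p * Real.exp x / (1 - p + p * Real.exp x) - p
      = p * (1 - p) * ((Real.exp x - 1) / (1 - p + p * Real.exp x)) := by
    field_simp
    ring
  rw [h6]
  have h7 : (x ^ 2 + 4 * x) / (2 + x) ^ 2 ≤ (Real.exp x - 1) / (1 - p + p * Real.exp x) := by
    rw [div_le_div_iff₀ hE hD]
    nlinarith
  have hpp : 0 ≤ p * (1 - p) := mul_nonneg hp (by linarith)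
  nlinarith [mul_le_mul_of_nonneg_left h7 hpp]

lemma lemA (p : ℝ) (hp : 0 ≤ p) (hp1 : p ≤ 1) (x : ℝ) (hx : 0 ≤ x) :
    p * (1 - p) * (x ^ 2 / (2 + x)) ≤ Real.log (1 - p + p * Real.exp x) - p * x := by
  set F : ℝ → ℝ := fun x => Real.log (1 - p + p * Real.exp x) - p * x
      - p * (1 - p) * (x ^ 2 / (2 + x)) with hF
  have hmono : MonotoneOn F (Ici 0) := by
    apply monotoneOn_of_deriv_nonneg (convex_Ici 0)
    · exact fun z hz => ((hasDerivAt_F_aux p hp z hz).continuousAt).continuousWithinAt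
    · intro z hz
      rw [interior_Ici] at hz
      exact (hasDerivAt_F_aux p hp z (le_of_lt hz)).differentiableAt.differentiableWithinAt
    · intro z hz
      rw [interior_Ici] at hz
      rw [(hasDerivAt_F_aux p hp z hz.le).deriv]
      exact derivF_nonneg_aux p hp hp1 z hz.le
  have h0 : F 0 = 0 := by simp [hF]
  have := hmono (self_mem_Ici) hx hx
  rw [h0] at this
  simp only [hF] at this
  linarith

lemma keyIneq (p : ℝ) (hp : 0 < p) (hp1 : p < 1) (h : ℝ) :
    p * (1 - p) * (h ^ 2 / (2 + |h|)) ≤ Real.log (1 - p + p * Real.exp h) - p * h := by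
  rcases le_or_gt 0 h with hh | hh
  · rw [abs_of_nonneg hh]; exact lemA p hp.le hp1.le h hh
  · rw [abs_of_neg hh]
    have hDpos : (0:ℝ) < 1 - p + p * Real.exp h := by
      nlinarith [Real.exp_pos h]
    have this1 := lemA (1 - p) (by linarith) (by linarith) (-h) (by linarith)
    have heq : Real.log (1 - (1 - p) + (1 - p) * Real.exp (-h))
        = Real.log (1 - p + p * Real.exp h) + (-h) := by
      have e1 : 1 - (1 - p) + (1 - p) * Real.exp (-h)
          = (1 - p + p * Real.exp h) * Real.exp (-h) := by
        rw [Real.exp_neg]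
        have := Real.exp_pos h
        field_simp
        ring
      rw [e1, Real.log_mul hDpos.ne' (Real.exp_pos _).ne', Real.log_exp]
    rw [heq, neg_sq] at this1
    linarith

lemma part3 (a b : ℝ) :
    Real.log (1 + Real.exp b) - Real.log (1 + Real.exp a) - logistic a * (b - a)
      ≥ logistic a * (1 - logistic a) * (b - a) ^ 2 / (2 + |b - a|) := by
  set p := logistic a with hpdef
  have hea := Real.exp_pos a
  have h1ea : (0:ℝ) < 1 + Real.exp a := by positivity
  have hp : 0 < p := by rw [hpdef]; unfold logistic; positivity
  have hp1 : p < 1 := by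
    rw [hpdef]; unfold logistic
    rw [div_lt_one h1ea]; linarith
  have hlog : Real.log (1 + Real.exp b) - Real.log (1 + Real.exp a)
      = Real.log (1 - p + p * Real.exp (b - a)) := by
    have e1 : 1 - p + p * Real.exp (b - a) = (1 + Real.exp b) / (1 + Real.exp a) := by
      rw [hpdef]; unfold logistic
      rw [eq_div_iff h1ea.ne']
      have : Real.exp a * Real.exp (b - a) = Real.exp b := by
        rw [← Real.exp_add]; ring_nf
      field_simp
      nlinarith [this]
    rw [e1, Real.log_div (by positivity) h1ea.ne']
  have := keyIneq p hp hp1 (b - a)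
  rw [ge_iff_le, hlog]
  calc p * (1 - p) * (b - a) ^ 2 / (2 + |b - a|)
      = p * (1 - p) * ((b - a) ^ 2 / (2 + |b - a|)) := by ring
    _ ≤ Real.log (1 - p + p * Real.exp (b - a)) - p * (b - a) := this

lemma hasFDerivAt_loglik {n p : ℕ} (X : Fin n → Fin p → ℝ) (θ₀ : Fin p → ℝ)
    (y : Fin n → ℝ) :
    HasFDerivAt (fun ϑ => loglik X ϑ y)
      (∑ i, (y i - logistic (∑ j, X i j * θ₀ j)) •
        (∑ j, X i j • ContinuousLinearMap.proj (R := ℝ) (φ := fun _ : Fin p => ℝ) j)) θ₀ := by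
  apply HasFDerivAt.fun_sum
  intro i _
  have hlin : HasFDerivAt (fun ϑ : Fin p → ℝ => ∑ j, X i j * ϑ j)
      (∑ j, X i j • ContinuousLinearMap.proj (R := ℝ) (φ := fun _ : Fin p => ℝ) j) θ₀ := by
    apply HasFDerivAt.fun_sum
    intro j _
    exact (ContinuousLinearMap.proj (R := ℝ) (φ := fun _ : Fin p => ℝ) j).hasFDerivAt.const_mul (X i j)
  have hscal : HasDerivAt (fun u : ℝ => y i * u - Real.log (1 + Real.exp u))
      (y i - logistic (∑ j, X i j * θ₀ j)) (∑ j, X i j * θ₀ j) := by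
    have h1 : HasDerivAt (fun u : ℝ => y i * u) (y i) (∑ j, X i j * θ₀ j) := by
      simpa using (hasDerivAt_id _).const_mul (y i)
    exact h1.sub (hasDerivAt_logloss _)
  exact hscal.comp_hasFDerivAt θ₀ hlin

lemma fderiv_loglik_apply {n p : ℕ} (X : Fin n → Fin p → ℝ) (θ₀ θ : Fin p → ℝ)
    (y : Fin n → ℝ) :
    fderiv ℝ (fun ϑ => loglik X ϑ y) θ₀ (θ - θ₀)
      = ∑ i, (y i - logistic (∑ j, X i j * θ₀ j)) * ∑ j, X i j * (θ j - θ₀ j) := by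
  rw [(hasFDerivAt_loglik X θ₀ y).fderiv]
  simp [ContinuousLinearMap.sum_apply, Finset.mul_sum]

/-- For `g(t) = log(1+eᵗ)` one has `g' = Ψ` and `g'' = Ψ(1−Ψ)`, the second-order
bound `g(b) − g(a) − g'(a)(b−a) ≥ g''(a)(b−a)²/(2+|b−a|)` holds, and consequently
`𝓛_{n,θ}(y) ≤ −Σᵢ g''(x_iᵀθ₀)|x_iᵀ(θ−θ₀)|²/(2+|x_iᵀ(θ−θ₀)|)`. -/
theorem taylor_remainder_upper_bound :
    (∀ t : ℝ, deriv (fun s => Real.log (1 + Real.exp s)) t = logistic t) ∧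
    (∀ t : ℝ, deriv (deriv (fun s => Real.log (1 + Real.exp s))) t
        = logistic t * (1 - logistic t)) ∧
    (∀ a b : ℝ,
      Real.log (1 + Real.exp b) - Real.log (1 + Real.exp a) - logistic a * (b - a)
        ≥ logistic a * (1 - logistic a) * (b - a) ^ 2 / (2 + |b - a|)) ∧
    (∀ (n p : ℕ) (X : Fin n → Fin p → ℝ) (θ θ₀ : Fin p → ℝ) (y : Fin n → ℝ),
      taylorRem X θ₀ θ y
        ≤ -∑ i, logistic (∑ j, X i j * θ₀ j) * (1 - logistic (∑ j, X i j * θ₀ j))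
            * (∑ j, X i j * (θ j - θ₀ j)) ^ 2
            / (2 + |∑ j, X i j * (θ j - θ₀ j)|)) := by
  have hd1 : ∀ t : ℝ, deriv (fun s => Real.log (1 + Real.exp s)) t = logistic t :=
    fun t => (hasDerivAt_logloss t).deriv
  refine ⟨hd1, ?_, part3, ?_⟩
  · intro t
    have hfun : deriv (fun s => Real.log (1 + Real.exp s)) = logistic := funext hd1
    rw [hfun]
    have h1e : (0:ℝ) < 1 + Real.exp t := by positivity
    have hnum : HasDerivAt Real.exp (Real.exp t) t := Real.hasDerivAt_exp t
    have hden : HasDerivAt (fun s => 1 + Real.exp s) (Real.exp t) t :=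
      (Real.hasDerivAt_exp t).const_add 1
    have hdiv : HasDerivAt logistic
        ((Real.exp t * (1 + Real.exp t) - Real.exp t * Real.exp t) / (1 + Real.exp t) ^ 2) t :=
      hnum.div hden h1e.ne'
    rw [hdiv.deriv]
    unfold logistic
    field_simp
  · intro n p X θ θ₀ y
    unfold taylorRem
    rw [fderiv_loglik_apply]
    unfold loglik
    rw [← Finset.sum_sub_distrib, ← Finset.sum_sub_distrib, ← Finset.sum_neg_distrib]
    apply Finset.sum_le_sum
    intro i _
    have hdi : (∑ j, X i j * θ j) - (∑ j, X i j * θ₀ j) = ∑ j, X i j * (θ j - θ₀ j) := by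
      rw [← Finset.sum_sub_distrib]
      exact Finset.sum_congr rfl fun j _ => by ring
    have h3 := part3 (∑ j, X i j * θ₀ j) (∑ j, X i j * θ j)
    rw [ge_iff_le] at h3
    rw [hdi] at h3
    set s := ∑ j, X i j * θ₀ j
    set s' := ∑ j, X i j * θ j
    set d := ∑ j, X i j * (θ j - θ₀ j)
    have hyd : y i * s' - y i * s - y i * d = 0 := by
      linear_combination y i * hdi
    linarith [h3, hyd]
end
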